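/- Let K be a measurable space, F a separable real normed vector space, and f ↦ ν_f an energy-measure assignment on (F, K). Let ν be a minimal energy-dominant measure and B a measurable subset of K. Then ν(B) = 0 if and only if ν_f(B) = 0 for every f ∈ F. -/

import Mathlib

/-! Since `ν` dominates every `ν_f`, the forward direction is immediate. Conversely, if every
`ν_f` vanishes on `B`, then `ν` restricted to `Bᶜ` is still a σ-finite measure dominating every
`ν_f`, so minimality gives `ν ≪ ν.restrict Bᶜ`, which vanishes on `B`. -/

open MeasureTheory

/-- The mutual measure value `ν_{f,g}(B) := (ν_{f+g}(B) − ν_f(B) − ν_g(B))/2`. -/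
noncomputable def mutualEM {F K : Type*} [MeasurableSpace K] [Add F]
    (em : F → Measure K) (f g : F) (B : Set K) : ℝ :=
  ((em (f + g) B).toReal - (em f B).toReal - (em g B).toReal) / 2

/-- An energy-measure assignment on `(F, K)`: each `f : F` is assigned a finite measure `ν_f`
on `K` such that (a) for every measurable `B`, `(f, g) ↦ ν_{f,g}(B)` is a (symmetric) bilinear
form on `F`, and (b) `(√(ν_f B) − √(ν_g B))² ≤ ν_{f−g}(B) ≤ 2‖f − g‖²` for all measurable `B`.
(Symmetry of the mutual form is automatic from its definition.) -/
structure EnergyMeasureAssignment (F K : Type*) [MeasurableSpace K]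
    [NormedAddCommGroup F] [NormedSpace ℝ F] where
  em : F → Measure K
  finite : ∀ f, IsFiniteMeasure (em f)
  add_left : ∀ (f₁ f₂ g : F) (B : Set K), MeasurableSet B →
    mutualEM em (f₁ + f₂) g B = mutualEM em f₁ g B + mutualEM em f₂ g B
  smul_left : ∀ (c : ℝ) (f g : F) (B : Set K), MeasurableSet B →
    mutualEM em (c • f) g B = c * mutualEM em f g B
  sqrt_diff_le : ∀ (f g : F) (B : Set K), MeasurableSet B →
    (Real.sqrt (em f B).toReal - Real.sqrt (em g B).toReal) ^ 2 ≤ (em (f - g) B).toReal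
  le_norm : ∀ (f g : F) (B : Set K), MeasurableSet B →
    (em (f - g) B).toReal ≤ 2 * ‖f - g‖ ^ 2

/-- `ν` is a minimal energy-dominant measure: it is σ-finite, dominates every energy measure,
and is absolutely continuous with respect to any other σ-finite measure that does so. -/
def IsMinimalEnergyDominant {F K : Type*} [MeasurableSpace K]
    [NormedAddCommGroup F] [NormedSpace ℝ F]
    (E : EnergyMeasureAssignment F K) (ν : Measure K) : Prop :=
  SigmaFinite ν ∧ (∀ f, E.em f ≪ ν) ∧
    ∀ ν' : Measure K, SigmaFinite ν' → (∀ f, E.em f ≪ ν') → ν ≪ ν'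

namespace MeasureTheory.Measure

variable {α ι : Type*} [MeasurableSpace α]

theorem AbsolutelyContinuous.restrict_compl_of_null {μ ν : Measure α} {s : Set α}
    (hμν : μ ≪ ν) (hs : μ s = 0) : μ ≪ ν.restrict sᶜ := by
  have hμ : μ.restrict sᶜ = μ := restrict_eq_self_of_ae_mem (measure_eq_zero_iff_ae_notMem.1 hs)
  exact hμ ▸ hμν.restrict sᶜ

theorem null_iff_forall_null_of_minimal_dominant {μ : ι → Measure α} {ν : Measure α}
    [SigmaFinite ν] (hdom : ∀ i, μ i ≪ ν)
    (hmin : ∀ ν' : Measure α, SigmaFinite ν' → (∀ i, μ i ≪ ν') → ν ≪ ν')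
    {s : Set α} (hs : MeasurableSet s) :
    ν s = 0 ↔ ∀ i, μ i s = 0 := by
  refine ⟨fun h i ↦ hdom i h, fun h ↦ ?_⟩
  have hν : ν ≪ ν.restrict sᶜ :=
    hmin _ inferInstance fun i ↦ (hdom i).restrict_compl_of_null (h i)
  exact hν (by simp [restrict_apply' hs.compl])

end MeasureTheory.Measure

theorem stmt9_general {F K : Type*} [MeasurableSpace K] [NormedAddCommGroup F] [NormedSpace ℝ F]
    (E : EnergyMeasureAssignment F K) (ν : Measure K)
    (hν : IsMinimalEnergyDominant E ν)
    (B : Set K) (hB : MeasurableSet B) :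
    ν B = 0 ↔ ∀ f : F, E.em f B = 0 :=
  have : SigmaFinite ν := hν.1
  Measure.null_iff_forall_null_of_minimal_dominant hν.2.1 hν.2.2 hB

/-- Lemma 2.4 of the paper: for a minimal energy-dominant measure `ν` and a measurable set `B`,
`ν(B) = 0` iff `ν_f(B) = 0` for every `f ∈ F`. -/
theorem stmt9 {F K : Type*} [MeasurableSpace K] [NormedAddCommGroup F] [NormedSpace ℝ F]
    [TopologicalSpace.SeparableSpace F]
    (E : EnergyMeasureAssignment F K) (ν : Measure K)
    (hν : IsMinimalEnergyDominant E ν)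
    (B : Set K) (hB : MeasurableSet B) :
    ν B = 0 ↔ ∀ f : F, E.em f B = 0 :=
  stmt9_general E ν hν B hB
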